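/- Let a = (a_1,…,a_n) with all a_i > 0 and n ≥ 4. Then the diagonal space DS(a) is a convex subset of ℝ^{n-3}; in particular it is connected. -/

import Mathlib

/-!
Every constraint cutting out `DS(a)` is linear in `L`, except `|L_{n-k} − a_{n-k}| ≤ L_{n-k-1}`,
which is the pair of linear inequalities `±(L_{n-k} − a_{n-k}) ≤ L_{n-k-1}`. So `DS(a)` is the
intersection of a hyperplane with half-spaces, hence convex, and convex sets are preconnected.
-/

/-- `R_k^min = max_{1 ≤ i ≤ k} (2 a_i − Σ_{j=1}^k a_j)`. -/
noncomputable def Rmin (a : ℕ → ℝ) (k : ℕ) : ℝ :=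
  sSup ((fun i => 2 * a i - ∑ j ∈ Finset.Icc 1 k, a j) '' Set.Icc 1 k)

/-- Membership of a vector of diagonal lengths `(L_2, …, L_{n-2})` (encoded as a function
`L : ℕ → ℝ`, with the convention `L (n-1) = a n`) in the diagonal space `DS(a)`:
for every `1 ≤ k ≤ n−3` one has `|L_{n-k} − a_{n-k}| ≤ L_{n-k-1} ≤ L_{n-k} + a_{n-k}`
and `max(0, R_{n-k-1}^min) ≤ L_{n-k-1} ≤ R_{n-k-1}^max`. -/
def memDS (a : ℕ → ℝ) (n : ℕ) (L : ℕ → ℝ) : Prop :=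
  ∀ k, 1 ≤ k → k ≤ n - 3 →
    |L (n - k) - a (n - k)| ≤ L (n - k - 1) ∧
    L (n - k - 1) ≤ L (n - k) + a (n - k) ∧
    max 0 (Rmin a (n - k - 1)) ≤ L (n - k - 1) ∧
    L (n - k - 1) ≤ ∑ j ∈ Finset.Icc 1 (n - k - 1), a j

section LinearConstraints

variable {E : Type*} [AddCommGroup E] [Module ℝ E]

theorem convex_setOf_le_add (f g : E →ₗ[ℝ] ℝ) (c : ℝ) : Convex ℝ {x | f x ≤ g x + c} := by
  simpa only [LinearMap.sub_apply, sub_le_iff_le_add'] using convex_halfSpace_le (f - g).isLinear c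

theorem convex_setOf_abs_sub_le (f g : E →ₗ[ℝ] ℝ) (c : ℝ) : Convex ℝ {x | |f x - c| ≤ g x} := by
  convert (convex_setOf_le_add f g c).inter (convex_setOf_le_add (-f) g (-c)) using 1
  ext x
  simp only [Set.mem_ofPred_eq, Set.mem_inter_iff, abs_sub_le_iff, LinearMap.neg_apply]
  constructor <;> rintro ⟨h₁, h₂⟩ <;> constructor <;> linarith

end LinearConstraints

theorem convex_setOf_memDS (a : ℕ → ℝ) (n : ℕ) : Convex ℝ {L | memDS a n L} := by
  simp only [memDS, Set.ofPred_forall, Set.ofPred_and]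
  refine convex_iInter fun k => convex_iInter fun _ => convex_iInter fun _ => ?_
  let π (i : ℕ) : (ℕ → ℝ) →ₗ[ℝ] ℝ := .proj i
  exact (convex_setOf_abs_sub_le (π (n - k)) (π (n - k - 1)) _).inter <|
    (convex_setOf_le_add (π (n - k - 1)) (π (n - k)) _).inter <|
    (convex_halfSpace_ge (π (n - k - 1)).isLinear _).inter
      (convex_halfSpace_le (π (n - k - 1)).isLinear _)

theorem DS_convex_and_preconnected_general
    (n : ℕ) (a : ℕ → ℝ) :
    Convex ℝ {L : ℕ → ℝ | L (n - 1) = a n ∧ memDS a n L} ∧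
    IsPreconnected {L : ℕ → ℝ | L (n - 1) = a n ∧ memDS a n L} := by
  have hconv : Convex ℝ {L : ℕ → ℝ | L (n - 1) = a n ∧ memDS a n L} := by
    rw [Set.ofPred_and]
    exact (convex_hyperplane (LinearMap.proj (n - 1)).isLinear _).inter (convex_setOf_memDS a n)
  exact ⟨hconv, hconv.isPreconnected⟩

/-- The diagonal space `DS(a)` is a convex subset; in particular it is (pre)connected. -/
theorem DS_convex_and_preconnected
    (n : ℕ) (hn : 4 ≤ n) (a : ℕ → ℝ) (ha : ∀ i, 1 ≤ i → i ≤ n → 0 < a i) :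
    Convex ℝ {L : ℕ → ℝ | L (n - 1) = a n ∧ memDS a n L} ∧
    IsPreconnected {L : ℕ → ℝ | L (n - 1) = a n ∧ memDS a n L} :=
  DS_convex_and_preconnected_general n a
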